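/- For every z ∈ C and every q ∈ C with 0 < |q| < 1, the third Jacobi theta function has the product representation Σ_{n∈Z} q^{n²} e^{2inz} = ∏_{n=1}^∞ (1 − q^{2n})(1 + 2q^{2n−1}cos(2z) + q^{4n−2}). -/

import Mathlib

/-!
Rothe's `q`-binomial theorem, applied to the `2N` factors `1 + q^(2j+1) w`, `1 + q^(2j+1) w⁻¹`
(`j < N`), expands their product as the Laurent polynomial `∑_{|m| ≤ N} [2N, N+m]_{q²} q^(m²) w^m`.
Multiplied by `(q²; q²)_N`, the Gaussian binomial coefficient `[2N, N+m]_{q²}` is uniformly bounded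
and tends to `1` as `N → ∞`, since `(q²; q²)_n` converges to a nonzero limit. Tannery's theorem then
gives the triple product `∏ (1 - q^(2n)) (1 + q^(2n-1) w) (1 + q^(2n-1) w⁻¹) = ∑ q^(m²) w^m`, and
the theorem is the case `w = e^(2iz)`, where `w + w⁻¹ = 2 cos 2z`.
-/

open Finset Filter Topology

namespace JacobiTripleProduct

lemma sum_range_two_mul_add_one (N : ℕ) : ∑ j ∈ range N, (2 * j + 1) = N ^ 2 := by
  induction N with
  | zero => simp
  | succ N ih => rw [sum_range_succ, ih]; ring

lemma two_mul_choose_two_add_self (k : ℕ) : 2 * k.choose 2 + k = k ^ 2 := by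
  induction k with
  | zero => simp
  | succ k ih => rw [Nat.choose_succ_succ', Nat.choose_one_right]; nlinarith [ih]

section CommRing

variable {R : Type*} [CommRing R] (Q : R)

def qPochhammer (n : ℕ) : R := ∏ j ∈ range n, (1 - Q ^ (j + 1))

def qChoose : ℕ → ℕ → R
  | _, 0 => 1
  | 0, _ + 1 => 0
  | n + 1, k + 1 => qChoose n k + Q ^ (k + 1) * qChoose n (k + 1)

@[simp] lemma qPochhammer_zero : qPochhammer Q 0 = 1 := prod_range_zero _

lemma qPochhammer_succ (n : ℕ) : qPochhammer Q (n + 1) = qPochhammer Q n * (1 - Q ^ (n + 1)) :=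
  prod_range_succ _ _

@[simp] lemma qChoose_zero_right (n : ℕ) : qChoose Q n 0 = 1 := by cases n <;> rfl

lemma qChoose_succ_succ (n k : ℕ) :
    qChoose Q (n + 1) (k + 1) = qChoose Q n k + Q ^ (k + 1) * qChoose Q n (k + 1) := rfl

lemma qChoose_eq_zero_of_lt {n k : ℕ} (h : n < k) : qChoose Q n k = 0 := by
  induction n generalizing k with
  | zero => obtain ⟨k, rfl⟩ := Nat.exists_eq_succ_of_ne_zero h.ne'; rfl
  | succ n ih =>
    obtain ⟨k, rfl⟩ := Nat.exists_eq_succ_of_ne_zero (Nat.ne_zero_of_lt h)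
    rw [qChoose_succ_succ, ih (by omega), ih (by omega), mul_zero, add_zero]

lemma qChoose_mul_qPochhammer_mul_qPochhammer {n k : ℕ} (h : k ≤ n) :
    qChoose Q n k * qPochhammer Q k * qPochhammer Q (n - k) = qPochhammer Q n := by
  induction n generalizing k with
  | zero =>
    obtain rfl : k = 0 := by omega
    simp
  | succ n ih =>
    rcases k with _ | k
    · simp
    rw [qChoose_succ_succ, Nat.add_sub_add_right, qPochhammer_succ, qPochhammer_succ Q n]
    have hk := ih (k := k) (by omega)
    rcases (show k = n ∨ k + 1 ≤ n by omega) with rfl | hkn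
    · rw [qChoose_eq_zero_of_lt Q (Nat.lt_succ_self k)]
      linear_combination (1 - Q ^ (k + 1)) * hk
    · obtain ⟨d, rfl⟩ := Nat.exists_eq_add_of_le hkn
      have hk' := ih (k := k + 1) (by omega)
      rw [show k + 1 + d - k = d + 1 by omega, qPochhammer_succ] at *
      rw [show k + 1 + d - (k + 1) = d by omega] at hk'
      linear_combination (1 - Q ^ (k + 1)) * hk + Q ^ (k + 1) * (1 - Q ^ (d + 1)) * hk'

/-- Rothe's `q`-binomial theorem. -/
theorem prod_one_add_pow_mul (n : ℕ) (x : R) :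
    ∏ j ∈ range n, (1 + Q ^ j * x) =
      ∑ k ∈ range (n + 1), Q ^ k.choose 2 * qChoose Q n k * x ^ k := by
  induction n generalizing x with
  | zero => simp
  | succ n ih =>
    -- `∏_{j < n+1} (1 + Q^j x) = (1 + x) ∏_{j < n} (1 + Q^j (Q x))`
    set a : ℕ → R := fun k => Q ^ (k.choose 2 + k) * qChoose Q n k * x ^ k with ha
    have hlast : a (n + 1) = 0 := by simp [ha, qChoose_eq_zero_of_lt Q (Nat.lt_succ_self n)]
    have hsucc (k : ℕ) : Q ^ (k + 1).choose 2 * qChoose Q (n + 1) (k + 1) * x ^ (k + 1) =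
        x * a k + a (k + 1) := by
      simp only [ha, qChoose_succ_succ, Nat.choose_succ_succ', Nat.choose_one_right]
      ring
    have hlhs : ∏ j ∈ range n, (1 + Q ^ (j + 1) * x) = ∑ k ∈ range (n + 1), a k := by
      simp_rw [pow_succ Q, mul_assoc, ih (Q * x), ha]
      exact sum_congr rfl fun k _ => by ring
    have hshift : ∑ k ∈ range (n + 1), a (k + 1) + a 0 = ∑ k ∈ range (n + 1), a k := by
      rw [← sum_range_succ', sum_range_succ, hlast, add_zero]
    rw [prod_range_succ', hlhs, sum_range_succ' _ (n + 1)]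
    simp only [hsucc, sum_add_distrib, ← mul_sum]
    have ha0 : a 0 = 1 := by simp [ha]
    rw [← hshift, ha0]
    simp only [pow_zero, one_mul, Nat.choose_zero_succ, qChoose_zero_right, mul_one]
    ring

end CommRing

section Field

variable {K : Type*} [Field K] {q w : K}

lemma prod_range_two_mul_one_add_pow_mul (hq : q ≠ 0) (hw : w ≠ 0) (N : ℕ) :
    ∏ j ∈ range (2 * N), (1 + (q ^ 2) ^ j * (q * w / (q ^ 2) ^ N)) =
      w ^ N / q ^ (N ^ 2) *
        ∏ j ∈ range N, ((1 + q ^ (2 * j + 1) * w) * (1 + q ^ (2 * j + 1) * w⁻¹)) := by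
  -- the `j`-th factor is `1 + q^(2j + 1 - 2N) w`: reflect the first half, keep the second
  have hlow : ∏ j ∈ range N, (1 + (q ^ 2) ^ (N - 1 - j) * (q * w / (q ^ 2) ^ N)) =
      ∏ j ∈ range N, (w / q ^ (2 * j + 1) * (1 + q ^ (2 * j + 1) * w⁻¹)) := by
    refine prod_congr rfl fun j hj => ?_
    obtain ⟨d, rfl⟩ := Nat.exists_eq_add_of_lt (mem_range.1 hj)
    rw [show j + d + 1 - 1 - j = d by omega]
    field_simp
    ring
  have hhigh : ∏ j ∈ range N, (1 + (q ^ 2) ^ (N + j) * (q * w / (q ^ 2) ^ N)) =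
      ∏ j ∈ range N, (1 + q ^ (2 * j + 1) * w) :=
    prod_congr rfl fun j _ => by field_simp; ring
  rw [two_mul, prod_range_add, ← prod_range_reflect, hlow, hhigh, prod_mul_distrib,
    prod_div_distrib, prod_const, card_range, prod_pow_eq_pow_sum, sum_range_two_mul_add_one,
    prod_mul_distrib]
  ring

lemma zpow_sub_sq_mul_zpow_sub (hq : q ≠ 0) (hw : w ≠ 0) (N k : ℕ) :
    q ^ (((k : ℤ) - N) ^ 2) * w ^ ((k : ℤ) - N) =
      q ^ (N ^ 2) / w ^ N * ((q ^ 2) ^ k.choose 2 * (q * w / (q ^ 2) ^ N) ^ k) := by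
  have hpow : (q ^ 2) ^ k.choose 2 * (q * w / (q ^ 2) ^ N) ^ k =
      q ^ (k ^ 2) * w ^ k / q ^ (2 * N * k) := by
    rw [div_pow, mul_pow, ← pow_mul, ← pow_mul, ← pow_mul, ← two_mul_choose_two_add_self k,
      pow_add]
    ring
  rw [show ((k : ℤ) - N) ^ 2 = ((k ^ 2 + N ^ 2 : ℕ) : ℤ) - ((2 * N * k : ℕ) : ℤ) by push_cast; ring,
    zpow_sub₀ hq, zpow_sub₀ hw, zpow_natCast, zpow_natCast, zpow_natCast, zpow_natCast, hpow,
    pow_add]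
  ring

theorem prod_one_add_mul_one_add_inv (hq : q ≠ 0) (hw : w ≠ 0) (N : ℕ) :
    ∏ j ∈ range N, ((1 + q ^ (2 * j + 1) * w) * (1 + q ^ (2 * j + 1) * w⁻¹)) =
      ∑ k ∈ range (2 * N + 1),
        qChoose (q ^ 2) (2 * N) k * (q ^ (((k : ℤ) - N) ^ 2) * w ^ ((k : ℤ) - N)) := by
  have h := prod_one_add_pow_mul (q ^ 2) (2 * N) (q * w / (q ^ 2) ^ N)
  rw [prod_range_two_mul_one_add_pow_mul hq hw, ← eq_inv_mul_iff_mul_eq₀ (by positivity),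
    inv_div, mul_sum] at h
  rw [h]
  exact sum_congr rfl fun k _ => by rw [zpow_sub_sq_mul_zpow_sub hq hw]; ring

lemma qChoose_eq_mul_inv (Q : K) {n k : ℕ} (h : k ≤ n) (hk : qPochhammer Q k ≠ 0)
    (hnk : qPochhammer Q (n - k) ≠ 0) :
    qChoose Q n k = qPochhammer Q n * (qPochhammer Q k)⁻¹ * (qPochhammer Q (n - k))⁻¹ := by
  rw [← qChoose_mul_qPochhammer_mul_qPochhammer Q h]
  field_simp

end Field

section CentralCoefficient

variable {R : Type*} [CommRing R] (Q : R)

def centralQChoose (N : ℕ) (m : ℤ) : R :=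
  if m.natAbs ≤ N then qChoose Q (2 * N) (N + m).toNat else 0

lemma tsum_centralQChoose_mul [TopologicalSpace R] (N : ℕ) (t : ℤ → R) :
    ∑' m : ℤ, centralQChoose Q N m * t m =
      ∑ k ∈ range (2 * N + 1), qChoose Q (2 * N) k * t (k - N) := by
  have hinj : Set.InjOn (fun k : ℕ => (k : ℤ) - N) (range (2 * N + 1)) :=
    fun a _ b _ h => by simp only at h; omega
  rw [tsum_eq_sum (s := (range (2 * N + 1)).image fun k : ℕ => (k : ℤ) - N), sum_image hinj]
  · refine sum_congr rfl fun k hk => ?_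
    have hk := mem_range.1 hk
    rw [centralQChoose, if_pos (by omega), show ((N : ℤ) + (k - N)).toNat = k by omega]
  · intro m hm
    rw [centralQChoose, if_neg, zero_mul]
    contrapose! hm
    exact mem_image.2 ⟨(N + m).toNat, mem_range.2 (by omega), by omega⟩

end CentralCoefficient

section Analysis

variable {K : Type*} [NormedField K] {Q : K}

lemma one_sub_pow_ne_zero (hQ : ‖Q‖ < 1) {n : ℕ} (hn : n ≠ 0) : 1 - Q ^ n ≠ 0 := fun h => by
  have := pow_lt_one₀ (norm_nonneg Q) hQ hn
  rw [← norm_pow, ← sub_eq_zero.1 h, norm_one] at this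
  exact this.false

lemma qPochhammer_ne_zero (hQ : ‖Q‖ < 1) (n : ℕ) : qPochhammer Q n ≠ 0 :=
  prod_ne_zero_iff.2 fun j _ => one_sub_pow_ne_zero hQ j.succ_ne_zero

variable [CompleteSpace K]

lemma multipliable_one_add_mul_pow (c : K) {x : K} (hx : ‖x‖ < 1) :
    Multipliable fun n : ℕ => 1 + c * x ^ n :=
  multipliable_one_add_of_summable <| by
    simpa [norm_mul, norm_pow] using
      (summable_geometric_of_lt_one (norm_nonneg x) hx).mul_left ‖c‖

lemma tendsto_qPochhammer (hQ : ‖Q‖ < 1) :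
    Tendsto (qPochhammer Q) atTop (𝓝 (∏' n, (1 - Q ^ (n + 1)))) := by
  have h := (multipliable_one_add_mul_pow (-Q) hQ).tendsto_prod_tprod_nat
  simp only [neg_mul, ← pow_succ', ← sub_eq_add_neg] at h
  exact h

lemma tprod_one_sub_pow_ne_zero (hQ : ‖Q‖ < 1) : ∏' n, (1 - Q ^ (n + 1)) ≠ 0 := by
  simp_rw [sub_eq_add_neg]
  refine tprod_one_add_ne_zero_of_summable (fun n => ?_) ?_
  · rw [← sub_eq_add_neg]
    exact one_sub_pow_ne_zero hQ n.succ_ne_zero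
  · simpa [norm_pow, pow_succ] using
      (summable_geometric_of_lt_one (norm_nonneg Q) hQ).mul_right ‖Q‖

lemma exists_norm_qPochhammer_le (hQ : ‖Q‖ < 1) :
    ∃ C, ∀ n, ‖qPochhammer Q n‖ ≤ C ∧ ‖(qPochhammer Q n)⁻¹‖ ≤ C := by
  have hlim := tendsto_qPochhammer hQ
  obtain ⟨C₁, hC₁⟩ := isBounded_iff_forall_norm_le.1 (Metric.isBounded_range_of_tendsto _ hlim)
  obtain ⟨C₂, hC₂⟩ := isBounded_iff_forall_norm_le.1
    (Metric.isBounded_range_of_tendsto _ (hlim.inv₀ (tprod_one_sub_pow_ne_zero hQ)))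
  exact ⟨max C₁ C₂, fun n => ⟨(hC₁ _ ⟨n, rfl⟩).trans (le_max_left _ _),
    (hC₂ _ ⟨n, rfl⟩).trans (le_max_right _ _)⟩⟩

lemma tendsto_centralQChoose (hQ : ‖Q‖ < 1) (m : ℤ) :
    Tendsto (centralQChoose Q · m) atTop (𝓝 (∏' n, (1 - Q ^ (n + 1)))⁻¹) := by
  have hlim := tendsto_qPochhammer hQ
  have hinv := hlim.inv₀ (tprod_one_sub_pow_ne_zero hQ)
  have htwo : Tendsto (fun N : ℕ => 2 * N) atTop atTop :=
    tendsto_atTop_atTop.2 fun b => ⟨b, fun a _ => by omega⟩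
  have hadd (s : ℤ) : Tendsto (fun N : ℕ => ((N : ℤ) + s).toNat) atTop atTop :=
    tendsto_atTop_atTop.2 fun b => ⟨b + s.natAbs, fun a _ => by omega⟩
  have h := (hlim.comp htwo).mul ((hinv.comp (hadd m)).mul (hinv.comp (hadd (-m))))
  rw [← mul_inv, ← div_eq_mul_inv, div_mul_cancel_left₀ (tprod_one_sub_pow_ne_zero hQ)] at h
  refine h.congr' ((eventually_ge_atTop m.natAbs).mono fun N hN => ?_)
  simp only [centralQChoose, if_pos hN]
  rw [qChoose_eq_mul_inv Q (by omega) (qPochhammer_ne_zero hQ _)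
    (qPochhammer_ne_zero hQ _), show 2 * N - ((N : ℤ) + m).toNat = ((N : ℤ) + -m).toNat by omega]
  simp only [Function.comp, mul_assoc]

lemma norm_qPochhammer_mul_centralQChoose_le (hQ : ‖Q‖ < 1) :
    ∃ C, ∀ N m, ‖qPochhammer Q N * centralQChoose Q N m‖ ≤ C := by
  obtain ⟨C, hC⟩ := exists_norm_qPochhammer_le hQ
  have hC0 : 0 ≤ C := (norm_nonneg _).trans (hC 0).1
  refine ⟨C * (C * C * C), fun N m => ?_⟩
  rw [centralQChoose]
  split_ifs with hm
  · rw [qChoose_eq_mul_inv Q (by omega) (qPochhammer_ne_zero hQ _) (qPochhammer_ne_zero hQ _),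
      norm_mul, norm_mul, norm_mul]
    gcongr
    exacts [(hC _).1, (hC _).1, (hC _).2, (hC _).2]
  · rw [mul_zero, norm_zero]
    positivity

end Analysis

section Complex

open Complex
open scoped Real

lemma summable_zpow_sq_mul_zpow {q : ℂ} (hq0 : q ≠ 0) (hq : ‖q‖ < 1) {w : ℂ} (hw : w ≠ 0) :
    Summable fun m : ℤ => q ^ (m ^ 2) * w ^ m := by
  have hτ : 0 < (log q / (π * I)).im := by
    have hlog : Real.log ‖q‖ < 0 := Real.log_neg (norm_pos_iff.2 hq0) hq
    simpa [div_im, log_re] using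
      div_neg_of_neg_of_pos (mul_neg_of_neg_of_pos hlog Real.pi_pos) (by positivity)
  refine ((summable_jacobiTheta₂_term_iff (log w / (2 * π * I)) _).2 hτ).congr fun m => ?_
  have hexponent : 2 * π * I * m * (log w / (2 * π * I)) + π * I * m ^ 2 * (log q / (π * I)) =
      ((m ^ 2 : ℤ) : ℂ) * log q + m * log w := by
    field_simp
    push_cast
    ring
  rw [jacobiTheta₂_term, hexponent, exp_add, exp_int_mul, exp_int_mul, exp_log hq0, exp_log hw]

theorem hasProd_jacobi_triple_product {q : ℂ} (hq0 : q ≠ 0) (hq : ‖q‖ < 1) {w : ℂ}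
    (hw : w ≠ 0) :
    HasProd (fun n : ℕ => (1 - q ^ (2 * n + 2)) * ((1 + q ^ (2 * n + 1) * w) *
      (1 + q ^ (2 * n + 1) * w⁻¹))) (∑' m : ℤ, q ^ (m ^ 2) * w ^ m) := by
  have hQ : ‖q ^ 2‖ < 1 := by rw [norm_pow]; exact pow_lt_one₀ (norm_nonneg q) hq two_ne_zero
  have hmul : Multipliable fun n : ℕ => (1 - q ^ (2 * n + 2)) * ((1 + q ^ (2 * n + 1) * w) *
      (1 + q ^ (2 * n + 1) * w⁻¹)) := by
    convert (multipliable_one_add_mul_pow (-q ^ 2) hQ).mul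
      ((multipliable_one_add_mul_pow (q * w) hQ).mul (multipliable_one_add_mul_pow (q * w⁻¹) hQ))
      using 2 with n
    ring
  have hpartial (N : ℕ) : ∏ n ∈ range N, (1 - q ^ (2 * n + 2)) * ((1 + q ^ (2 * n + 1) * w) *
      (1 + q ^ (2 * n + 1) * w⁻¹)) =
        ∑' m : ℤ, qPochhammer (q ^ 2) N * centralQChoose (q ^ 2) N m * (q ^ (m ^ 2) * w ^ m) := by
    simp_rw [mul_assoc, tsum_mul_left, tsum_centralQChoose_mul]
    rw [prod_mul_distrib, prod_one_add_mul_one_add_inv hq0 hw, qPochhammer]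
    congr 1
    exact prod_congr rfl fun j _ => by ring
  obtain ⟨C, hC⟩ := norm_qPochhammer_mul_centralQChoose_le hQ
  refine hmul.hasProd_iff_tendsto_nat.2 ?_
  simp_rw [hpartial]
  refine tendsto_tsum_of_dominated_convergence
    ((summable_zpow_sq_mul_zpow hq0 hq hw).norm.mul_left C) (fun m => ?_)
    (.of_forall fun N m => ?_)
  · have h := ((tendsto_qPochhammer hQ).mul (tendsto_centralQChoose hQ m)).mul_const
      (q ^ (m ^ 2) * w ^ m)
    rwa [mul_inv_cancel₀ (tprod_one_sub_pow_ne_zero hQ), one_mul] at h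
  · rw [norm_mul]
    exact mul_le_mul_of_nonneg_right (hC N m) (norm_nonneg _)

end Complex

end JacobiTripleProduct

theorem jacobi_triple_product_theta3 (z q : ℂ) (h0 : 0 < ‖q‖)
    (h1 : ‖q‖ < 1) :
    (∑' n : ℤ, q ^ (n ^ 2) * Complex.exp (2 * Complex.I * (n : ℂ) * z)) =
      ∏' n : ℕ, ((1 - q ^ (2 * n + 2)) *
        (1 + 2 * q ^ (2 * n + 1) * Complex.cos (2 * z) + q ^ (4 * n + 2))) := by
  have hcos : 2 * Complex.cos (2 * z) =
      Complex.exp (2 * Complex.I * z) + (Complex.exp (2 * Complex.I * z))⁻¹ := by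
    rw [Complex.cos, ← Complex.exp_neg]
    ring_nf
  have hexp (n : ℤ) :
      Complex.exp (2 * Complex.I * n * z) = Complex.exp (2 * Complex.I * z) ^ n := by
    rw [← Complex.exp_int_mul]
    ring_nf
  set w := Complex.exp (2 * Complex.I * z)
  have hw : w ≠ 0 := Complex.exp_ne_zero _
  have hfactor (n : ℕ) : 1 + 2 * q ^ (2 * n + 1) * Complex.cos (2 * z) + q ^ (4 * n + 2) =
      (1 + q ^ (2 * n + 1) * w) * (1 + q ^ (2 * n + 1) * w⁻¹) := by
    linear_combination q ^ (2 * n + 1) * hcos - q ^ (4 * n + 2) * mul_inv_cancel₀ hw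
  simp_rw [hexp, hfactor]
  exact (JacobiTripleProduct.hasProd_jacobi_triple_product (norm_pos_iff.1 h0) h1 hw).tprod_eq.symm
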